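/- For every Sidon set B ⊆ ℕ and every function ω : ℝ → ℝ with ω(x) → ∞, there exists a perfect difference set A ⊆ ℕ satisfying A(x) ≥ B(x/3) − ω(x) for all sufficiently large x. -/

import Mathlib

open Filter

/-- `B` is a Sidon set: every nonzero integer has at most one representation
as a difference of two elements of `B`. -/
def IsSidonSet (B : Set ℤ) : Prop :=
  ∀ u : ℤ, u ≠ 0 → ({p : ℤ × ℤ | p.1 ∈ B ∧ p.2 ∈ B ∧ p.1 - p.2 = u}).Subsingleton

/-- `A` is a perfect difference set: every nonzero integer has exactly one
representation as a difference of two elements of `A`. -/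
def IsPerfectDifferenceSet (A : Set ℤ) : Prop :=
  ∀ u : ℤ, u ≠ 0 → ∃! p : ℤ × ℤ, p.1 ∈ A ∧ p.2 ∈ A ∧ p.1 - p.2 = u

/-!
Start from the Sidon set `3B` and run through an enumeration `u₀, u₁, …` of `ℤ`. When `uₖ` is
not yet a difference, adjoin a pair `{d, d + uₖ}` of huge non-multiples of `3`. A new coincidence
`v + c = a + b` cannot have exactly one term outside `3ℤ`, so the elements of `3B` caught in one
are determined by two or three of the finitely many non-multiples present: only boundedly many
must be deleted, and all of them can be taken beyond a height past which `ω` already exceeds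
the total number of deletions so far. Hence at most `ω x` elements up to `x` are ever deleted.
Elements below the current height are never touched again, so the sets converge to a perfect
difference set.
-/

theorem isSidonSet_iff_add {S : Set ℤ} :
    IsSidonSet S ↔ ∀ a ∈ S, ∀ b ∈ S, ∀ c ∈ S, ∀ d ∈ S, a + b = c + d → a = c ∨ a = d := by
  constructor
  · intro hS a ha b hb c hc d hd hsum
    by_cases hac : a = c
    · exact Or.inl hac
    · exact Or.inr (congrArg Prod.fst <|
        hS (a - c) (sub_ne_zero.2 hac) (x := (a, c)) (y := (d, b)) ⟨ha, hc, rfl⟩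
          ⟨hd, hb, by dsimp only; omega⟩)
  · rintro hS u hu ⟨a, c⟩ ⟨ha, hc, hac⟩ ⟨d, b⟩ ⟨hd, hb, hdb⟩
    dsimp only at *
    rcases hS a ha b hb d hd c hc (by omega) with rfl | rfl
    · exact Prod.ext rfl (by dsimp only; omega)
    · exact absurd hac (by simpa using hu.symm)

theorem IsSidonSet.mono {S T : Set ℤ} (hT : IsSidonSet T) (hST : S ⊆ T) : IsSidonSet S :=
  fun u hu _ hp _ hq => hT u hu ⟨hST hp.1, hST hp.2.1, hp.2.2⟩ ⟨hST hq.1, hST hq.2.1, hq.2.2⟩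

theorem IsSidonSet.image_mul_left {S : Set ℤ} (hS : IsSidonSet S) (m : ℤ) :
    IsSidonSet ((m * ·) '' S) := by
  rcases eq_or_ne m 0 with rfl | hm
  · rw [isSidonSet_iff_add]
    rintro _ ⟨a, -, rfl⟩ _ - _ ⟨c, -, rfl⟩ - - -
    simp
  rw [isSidonSet_iff_add] at hS ⊢
  rintro _ ⟨a, ha, rfl⟩ _ ⟨b, hb, rfl⟩ _ ⟨c, hc, rfl⟩ _ ⟨d, hd, rfl⟩ hsum
  have : a + b = c + d := mul_left_cancel₀ hm (by linarith)
  rcases hS a ha b hb c hc d hd this with rfl | rfl <;> simp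

theorem IsSidonSet.isPerfectDifferenceSet {A : Set ℤ} (hA : IsSidonSet A)
    (hrep : ∀ u ≠ 0, ∃ x ∈ A, ∃ y ∈ A, x - y = u) : IsPerfectDifferenceSet A := by
  intro u hu
  obtain ⟨x, hx, y, hy, hxy⟩ := hrep u hu
  exact ⟨(x, y), ⟨hx, hy, hxy⟩, fun q hq => hA u hu hq ⟨hx, hy, hxy⟩⟩

theorem IsSidonSet.union_pair {S : Set ℤ} (hS : IsSidonSet S) {K u d : ℤ}
    (hpos : ∀ s ∈ S, 0 < s) (hK : ∀ s ∈ S, s ≤ K) (hu : ∀ x ∈ S, ∀ y ∈ S, x - y ≠ u)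
    (hd : 2 * K + 2 * |u| < d) : IsSidonSet (S ∪ {d, d + u}) := by
  rw [isSidonSet_iff_add] at hS ⊢
  have cases : ∀ t ∈ S ∪ {d, d + u}, (t ∈ S ∧ 0 < t ∧ t ≤ K) ∨ t = d ∨ t = d + u := by
    rintro t (ht | rfl | rfl)
    exacts [Or.inl ⟨ht, hpos t ht, hK t ht⟩, Or.inr (Or.inl rfl), Or.inr (Or.inr rfl)]
  have hu' : ∀ x ∈ S, ∀ y ∈ S, x - y = u ∨ y - x = u → False := fun x hx y hy h =>
    h.elim (hu x hx y hy) (hu y hy x hx)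
  have hu₁ := le_abs_self u
  have hu₂ := neg_abs_le u
  intro a ha' b hb' c hc' e he' hsum
  -- Each placement of `a, b, c, e` among old and new elements is excluded by size, by `hu`
  -- (one new element on each side) or by `hS` (no new element).
  rcases cases a ha' with ⟨ha, ha0, haK⟩ | rfl | rfl <;>
    rcases cases b hb' with ⟨hb, hb0, hbK⟩ | rfl | rfl <;>
    rcases cases c hc' with ⟨hc, hc0, hcK⟩ | rfl | rfl <;>
    rcases cases e he' with ⟨he, he0, heK⟩ | rfl | rfl <;>
    first
    | omega
    | exact hS a ha b hb c hc e he hsum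
    | exact (hu' a ha c hc (by omega)).elim
    | exact (hu' a ha e he (by omega)).elim
    | exact (hu' b hb c hc (by omega)).elim
    | exact (hu' b hb e he (by omega)).elim

/-- `Q` is a Sidon set exactly when it avoids `sidonViolators Q`. -/
def sidonViolators (Q : Set ℤ) : Set ℤ :=
  {v | ∃ a ∈ Q, ∃ b ∈ Q, ∃ c ∈ Q, v + c = a + b ∧ v ≠ a ∧ v ≠ b}

theorem sidonViolators_mono {Q Q' : Set ℤ} (h : Q ⊆ Q') :
    sidonViolators Q ⊆ sidonViolators Q' := by
  rintro v ⟨a, ha, b, hb, c, hc, hv⟩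
  exact ⟨a, h ha, b, h hb, c, h hc, hv⟩

theorem IsSidonSet.of_sidonViolators_subset {O T : Set ℤ} (hO : IsSidonSet O)
    (h : ∀ v ∈ T, v ∈ sidonViolators T → v ∈ O) : IsSidonSet T := by
  rw [isSidonSet_iff_add] at hO ⊢
  intro a ha b hb c hc d hd hsum
  by_contra! hne
  obtain ⟨hac, had⟩ := hne
  have hbc : b ≠ c := fun h => had (by omega)
  have hbd : b ≠ d := fun h => hac (by omega)
  have haO := h a ha ⟨c, hc, d, hd, b, hb, hsum, hac, had⟩
  have hbO := h b hb ⟨c, hc, d, hd, a, ha, by omega, hbc, hbd⟩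
  have hcO := h c hc ⟨a, ha, b, hb, d, hd, by omega, hac.symm, hbc.symm⟩
  have hdO := h d hd ⟨a, ha, b, hb, c, hc, by omega, had.symm, hbd.symm⟩
  exact (hO a haO b hbO c hcO d hdO hsum).elim hac had

theorem IsSidonSet.subsingleton_setOf_sub_eq {S : Set ℤ} (hS : IsSidonSet S) (n : ℤ) :
    {v ∈ S | ∃ a ∈ S, v ≠ a ∧ v - a = n}.Subsingleton := by
  rintro v ⟨hv, a, ha, hva, hn⟩ w ⟨hw, b, hb, -, rfl⟩
  rw [isSidonSet_iff_add] at hS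
  exact (hS v hv b hb w hw a ha (by omega)).resolve_right (fun h => hva (by omega))

theorem IsSidonSet.encard_setOf_add_eq_le {S : Set ℤ} (hS : IsSidonSet S) (n : ℤ) :
    {v ∈ S | ∃ c ∈ S, v + c = n}.encard ≤ 2 := by
  rcases Set.eq_empty_or_nonempty {v ∈ S | ∃ c ∈ S, v + c = n} with
    h | ⟨v₀, hv₀, c₀, hc₀, rfl⟩
  · simp [h]
  rw [isSidonSet_iff_add] at hS
  calc {v ∈ S | ∃ c ∈ S, v + c = v₀ + c₀}.encard ≤ ({v₀, c₀} : Set ℤ).encard :=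
        Set.encard_le_encard fun v ⟨hv, c, hc, hsum⟩ => hS v hv c hc v₀ hv₀ c₀ hc₀ hsum
    _ ≤ 2 := (Set.encard_insert_le _ _).trans (by rw [Set.encard_singleton]; rfl)

/-- A quadruple `v + c = a + b` cannot have exactly one element outside `mℤ`, so a violator
`v ∈ S` is determined, up to three choices, by two elements of `Γ`, or by three. -/
theorem IsSidonSet.inter_sidonViolators_union_subset {S : Set ℤ} (hS : IsSidonSet S)
    {m : ℤ} (hSm : ∀ s ∈ S, m ∣ s) (Γ : Finset ℤ) (hΓm : ∀ g ∈ Γ, ¬ m ∣ g) :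
    S ∩ sidonViolators (S ∪ Γ) ⊆ ⋃ p ∈ Γ ×ˢ Γ ×ˢ Γ,
      ({v ∈ S | ∃ a ∈ S, v ≠ a ∧ v - a = p.1 - p.2.1} ∪
        {v ∈ S | ∃ c ∈ S, v + c = p.1 + p.2.1} ∪ {p.1 + p.2.1 - p.2.2}) := by
  rintro v ⟨hv, a, ha, b, hb, c, hc, hsum, hva, hvb⟩
  simp only [Set.mem_iUnion, Finset.mem_product, exists_prop, Prod.exists]
  have hvm := hSm v hv
  rcases ha with ha | ha <;> rcases hb with hb | hb <;> rcases hc with hc | hc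
  · rw [isSidonSet_iff_add] at hS
    exact ((hS v hv c hc a ha b hb hsum).elim hva hvb).elim
  · exact (hΓm c hc ((dvd_add_right hvm).1 (hsum ▸ dvd_add (hSm a ha) (hSm b hb)))).elim
  · exact (hΓm b hb ((dvd_add_right (hSm a ha)).1 (hsum ▸ dvd_add hvm (hSm c hc)))).elim
  · exact ⟨b, c, b, ⟨hb, hc, hb⟩, Or.inl (Or.inl ⟨hv, a, ha, hva, by omega⟩)⟩
  · exact (hΓm a ha ((dvd_add_left (hSm b hb)).1 (hsum ▸ dvd_add hvm (hSm c hc)))).elim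
  · exact ⟨a, c, a, ⟨ha, hc, ha⟩, Or.inl (Or.inl ⟨hv, b, hb, hvb, by omega⟩)⟩
  · exact ⟨a, b, a, ⟨ha, hb, ha⟩, Or.inl (Or.inr ⟨hv, c, hc, hsum⟩)⟩
  · exact ⟨a, b, c, ⟨ha, hb, hc⟩, Or.inr (by simp only [Set.mem_singleton_iff]; omega)⟩

theorem IsSidonSet.encard_inter_sidonViolators_union_le {S : Set ℤ} (hS : IsSidonSet S)
    {m : ℤ} (hSm : ∀ s ∈ S, m ∣ s) (Γ : Finset ℤ) (hΓm : ∀ g ∈ Γ, ¬ m ∣ g) :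
    (S ∩ sidonViolators (S ∪ Γ)).encard ≤ 4 * Γ.card ^ 3 := by
  refine (Set.encard_le_encard (hS.inter_sidonViolators_union_subset hSm Γ hΓm)).trans ?_
  refine (Finset.set_encard_biUnion_le _ _).trans ?_
  calc _ ≤ ∑ _p ∈ Γ ×ˢ Γ ×ˢ Γ, (4 : ℕ∞) := by
        refine Finset.sum_le_sum fun p _ => ?_
        calc _ ≤ _ + ({p.1 + p.2.1 - p.2.2} : Set ℤ).encard := Set.encard_union_le _ _
          _ ≤ (_ + _) + 1 := by
              rw [Set.encard_singleton]
              gcongr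
              exact Set.encard_union_le _ _
          _ ≤ (1 + 2) + 1 := by
              gcongr
              exacts [Set.encard_le_one_iff_subsingleton.2 (hS.subsingleton_setOf_sub_eq _),
                hS.encard_setOf_add_eq_le _]
          _ = 4 := by norm_num
    _ = 4 * Γ.card ^ 3 := by
        simp [Finset.card_product]
        ring

def CountBoundedBy (ω : ℝ → ℝ) (D : Set ℤ) : Prop :=
  ∀ v ∈ D, ∀ z : ℝ, (v : ℝ) ≤ z → ({w ∈ D | (w : ℝ) ≤ z}.ncard : ℝ) ≤ ω z

theorem CountBoundedBy.ncard_le {ω : ℝ → ℝ} {D : Set ℤ} (hD : CountBoundedBy ω D) {z : ℝ}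
    (hz : 0 ≤ ω z) : ({w ∈ D | (w : ℝ) ≤ z}.ncard : ℝ) ≤ ω z := by
  rcases Set.eq_empty_or_nonempty {w ∈ D | (w : ℝ) ≤ z} with h | ⟨v, hv, hvz⟩
  · simpa [h] using hz
  · exact hD v hv z hvz

theorem CountBoundedBy.of_subset_union {ω : ℝ → ℝ} {D R D' : Set ℤ}
    (hD : CountBoundedBy ω D) (hDfin : D.Finite) (hRfin : R.Finite) {τ : ℝ} (hRτ : ∀ r ∈ R, τ ≤ r)
    (hτ : ∀ z ≥ τ, ((D.ncard + R.ncard : ℕ) : ℝ) ≤ ω z) (h : D' ⊆ D ∪ R) :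
    CountBoundedBy ω D' := by
  intro v hv z hvz
  by_cases hnew : ∃ r ∈ D', r ∉ D ∧ (r : ℝ) ≤ z
  · obtain ⟨r, hr, hrD, hrz⟩ := hnew
    have hrR : r ∈ R := (h hr).resolve_left hrD
    refine le_trans ?_ (hτ z ((hRτ r hrR).trans hrz))
    have : {w ∈ D' | (w : ℝ) ≤ z}.ncard ≤ D.ncard + R.ncard :=
      (Set.ncard_le_ncard ((Set.sep_subset _ _).trans h) (hDfin.union hRfin)).trans
        (Set.ncard_union_le D R)
    exact_mod_cast this
  · push Not at hnew
    have hsub : {w ∈ D' | (w : ℝ) ≤ z} ⊆ {w ∈ D | (w : ℝ) ≤ z} := fun w ⟨hw, hwz⟩ =>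
      ⟨by_contra fun hwD => (hnew w hw hwD).not_ge hwz, hwz⟩
    have hvD : v ∈ D := (hsub ⟨hv, hvz⟩).1
    have hcard := Set.ncard_le_ncard hsub (hDfin.subset (Set.sep_subset _ _))
    exact le_trans (by exact_mod_cast hcard) (hD v hvD z hvz)

theorem exists_gt_not_three_dvd (M u : ℤ) : ∃ d, M < d ∧ ¬ 3 ∣ d ∧ ¬ 3 ∣ d + u := by
  by_cases hu : u % 3 = 2
  · exact ⟨3 * max M 0 + 2, by omega, by omega, by omega⟩
  · exact ⟨3 * max M 0 + 1, by omega, by omega, by omega⟩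

theorem IsSidonSet.exists_diff_union_pair {P : Set ℤ} (hP : IsSidonSet P)
    (hpos : ∀ p ∈ P, 0 < p) (G : Finset ℤ) (hPG : ∀ p ∈ P, ¬ 3 ∣ p → p ∈ G)
    (hG : ∀ g ∈ G, ¬ 3 ∣ g) {K : ℤ} (hK : ∀ p ∈ P, ¬ 3 ∣ p → p ≤ K) {u : ℤ}
    (hu : ∀ x ∈ P, ∀ y ∈ P, x - y ≠ u) {d : ℤ} (hd : 2 * K + 2 * |u| < d)
    (hd₁ : ¬ 3 ∣ d) (hd₂ : ¬ 3 ∣ d + u) :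
    ∃ R : Set ℤ, (∀ r ∈ R, K < r) ∧ R.encard ≤ 4 * (G.card + 2) ^ 3 ∧
      IsSidonSet ((P \ R) ∪ {d, d + u}) := by
  -- Violators up to `K` are harmless by `IsSidonSet.union_pair`; those above `K` are deleted.
  set R := {v ∈ P | K < v} ∩ sidonViolators (P ∪ {d, d + u})
  refine ⟨R, fun v hv => hv.1.2, ?_, ?_⟩
  · set Γ : Finset ℤ := G ∪ {d, d + u}
    have hΓ : ∀ g ∈ Γ, ¬ 3 ∣ g := by
      simp only [Γ, Finset.mem_union, Finset.mem_insert, Finset.mem_singleton]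
      rintro g (hg | rfl | rfl)
      exacts [hG g hg, hd₁, hd₂]
    have hRsub : R ⊆ {p ∈ P | 3 ∣ p} ∩ sidonViolators ({p ∈ P | 3 ∣ p} ∪ Γ) := by
      refine fun v ⟨⟨hv, hvK⟩, hviol⟩ =>
        ⟨⟨hv, by_contra fun h => (hK v hv h).not_gt hvK⟩, sidonViolators_mono ?_ hviol⟩
      rintro p (hp | hp)
      · by_cases h3 : 3 ∣ p
        exacts [Or.inl ⟨hp, h3⟩, Or.inr (Finset.mem_union_left _ (hPG p hp h3))]
      · exact Or.inr (Finset.mem_union_right _ (by simpa using hp))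
    have hΓcard : Γ.card ≤ G.card + 2 :=
      (Finset.card_union_le _ _).trans (add_le_add_right Finset.card_le_two _)
    calc R.encard ≤ 4 * Γ.card ^ 3 := (Set.encard_le_encard hRsub).trans <|
          (hP.mono (Set.sep_subset _ _)).encard_inter_sidonViolators_union_le
            (fun p hp => hp.2) Γ hΓ
      _ ≤ 4 * (G.card + 2) ^ 3 := by gcongr; exact_mod_cast hΓcard
  · have hold : IsSidonSet ({p ∈ P | p ≤ K} ∪ {d, d + u}) :=
      (hP.mono (Set.sep_subset _ _)).union_pair (fun p hp => hpos p hp.1) (fun p hp => hp.2)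
        (fun x hx y hy => hu x hx.1 y hy.1) hd
    refine hold.of_sidonViolators_subset fun v hv hviol => ?_
    rcases hv with ⟨hvP, hvR⟩ | hv
    · refine Or.inl ⟨hvP, not_lt.1 fun hvK => ?_⟩
      exact hvR ⟨⟨hvP, hvK⟩, sidonViolators_mono (Set.union_subset_union_left _ Set.sdiff_subset)
        hviol⟩
    · exact Or.inr hv

/-- Stage `k` of the construction: `P` is `C` with finitely many elements deleted plus finitely
many non-multiples of `3`, its elements up to `K` are final, and `e 0, …, e (k - 1)` are
differences of final elements. -/
structure Stage (C : Set ℤ) (ω : ℝ → ℝ) (e : ℕ → ℤ) (k : ℕ) (P : Set ℤ) (K : ℤ) : Prop where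
  isSidonSet : IsSidonSet P
  pos : ∀ p ∈ P, 0 < p
  finite_not_dvd : {p ∈ P | ¬ 3 ∣ p}.Finite
  le_of_not_dvd : ∀ p ∈ P, ¬ 3 ∣ p → p ≤ K
  finite_removed : (C \ P).Finite
  countBoundedBy_removed : CountBoundedBy ω (C \ P)
  represents : ∀ j < k, e j ≠ 0 → ∃ x ∈ P, ∃ y ∈ P, x ≤ K ∧ y ≤ K ∧ x - y = e j
  le_bound : (k : ℤ) ≤ K

theorem mem_diff_union_pair_iff {P R : Set ℤ} {K d u x : ℤ} (hR : ∀ r ∈ R, K < r)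
    (hd : K < d) (hdu : K < d + u) (hx : x ≤ K) : x ∈ (P \ R) ∪ {d, d + u} ↔ x ∈ P := by
  refine ⟨?_, fun hxP => Or.inl ⟨hxP, fun hxR => (hR x hxR).not_ge hx⟩⟩
  rintro (⟨hxP, -⟩ | rfl | rfl)
  exacts [hxP, (hd.not_ge hx).elim, (hdu.not_ge hx).elim]

namespace Stage

variable {C : Set ℤ} {ω : ℝ → ℝ} {e : ℕ → ℤ} {k : ℕ} {P : Set ℤ} {K : ℤ}

theorem succ_of_represented (h : Stage C ω e k P K)
    (hrep : e k ≠ 0 → ∃ x ∈ P, ∃ y ∈ P, x - y = e k) :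
    ∃ K', Stage C ω e (k + 1) P K' ∧ K ≤ K' := by
  obtain ⟨K', hKK', hK'⟩ : ∃ K', K + 1 ≤ K' ∧
      (e k ≠ 0 → ∃ x ∈ P, ∃ y ∈ P, x ≤ K' ∧ y ≤ K' ∧ x - y = e k) := by
    by_cases hk : e k = 0
    · exact ⟨K + 1, le_rfl, fun h => (h hk).elim⟩
    · obtain ⟨x, hx, y, hy, hxy⟩ := hrep hk
      exact ⟨max (K + 1) (max x y), le_max_left _ _,
        fun _ => ⟨x, hx, y, hy, by omega, by omega, hxy⟩⟩
  have hkK := h.le_bound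
  refine ⟨K', ⟨h.isSidonSet, h.pos, h.finite_not_dvd, fun p hp h3 => ?_, h.finite_removed,
    h.countBoundedBy_removed, fun j hj hj0 => ?_, by push_cast; omega⟩, by omega⟩
  · have := h.le_of_not_dvd p hp h3
    omega
  · rcases Nat.lt_succ_iff_lt_or_eq.1 hj with hj | rfl
    · obtain ⟨x, hx, y, hy, hxK, hyK, hxy⟩ := h.represents j hj hj0
      exact ⟨x, hx, y, hy, by omega, by omega, hxy⟩
    · exact hK' hj0

theorem succ_of_not_represented (hω : Tendsto ω atTop atTop) (h : Stage C ω e k P K)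
    (hrep : ∀ x ∈ P, ∀ y ∈ P, x - y ≠ e k) :
    ∃ P' K', Stage C ω e (k + 1) P' K' ∧ K ≤ K' ∧ ∀ x ≤ K, (x ∈ P' ↔ x ∈ P) := by
  set u := e k
  set G := h.finite_not_dvd.toFinset
  obtain ⟨τ, hτ⟩ := eventually_atTop.1 <| tendsto_atTop.1 hω
    (((C \ P).ncard + 4 * (G.card + 2) ^ 3 : ℕ) : ℝ)
  set K₁ := max K ⌈τ⌉
  have hkK := h.le_bound
  obtain ⟨d, hd, hd₁, hd₂⟩ := exists_gt_not_three_dvd (2 * K₁ + 2 * |u|) u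
  have hu₁ := le_abs_self u
  have hu₂ := neg_abs_le u
  have hdK : K < d ∧ K < d + u := by omega
  obtain ⟨R, hRK, hRcard, hsidon⟩ := h.isSidonSet.exists_diff_union_pair h.pos G
    (fun p hp h3 => (Set.Finite.mem_toFinset _).2 ⟨hp, h3⟩)
    (fun g hg => ((Set.Finite.mem_toFinset _).1 hg).2)
    (fun p hp h3 => (h.le_of_not_dvd p hp h3).trans (le_max_left _ _)) hrep hd hd₁ hd₂
  obtain ⟨hRfin, hRcard⟩ := Set.encard_le_coe_iff_finite_ncard_le.1 (by exact_mod_cast hRcard)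
  have hagree : ∀ x ≤ K, (x ∈ (P \ R) ∪ {d, d + u} ↔ x ∈ P) := fun x hx =>
    mem_diff_union_pair_iff (fun r hr => (le_max_left _ _).trans_lt (hRK r hr)) hdK.1 hdK.2 hx
  have hremoved : C \ ((P \ R) ∪ {d, d + u}) ⊆ (C \ P) ∪ R := fun c ⟨hc, hcP'⟩ => by
    by_cases hcR : c ∈ R
    exacts [Or.inr hcR, Or.inl ⟨hc, fun hcP => hcP' (Or.inl ⟨hcP, hcR⟩)⟩]
  refine ⟨_, d + |u|, ⟨hsidon, ?_, ?_, ?_, ?_, ?_, ?_, by push_cast; omega⟩, by omega,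
    hagree⟩
  · rintro p (⟨hp, -⟩ | rfl | rfl)
    exacts [h.pos p hp, by omega, by omega]
  · refine (h.finite_not_dvd.union (Set.toFinite {d, d + u})).subset ?_
    rintro p ⟨⟨hp, -⟩ | hp, h3⟩
    exacts [Or.inl ⟨hp, h3⟩, Or.inr hp]
  · rintro p (⟨hp, -⟩ | rfl | rfl) h3
    exacts [by have := h.le_of_not_dvd p hp h3; omega, by omega, by omega]
  · exact (h.finite_removed.union hRfin).subset hremoved
  · refine h.countBoundedBy_removed.of_subset_union h.finite_removed hRfin
      (τ := τ) (fun r hr => ?_) (fun z hz => ?_) hremoved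
    · exact (Int.le_ceil τ).trans (by exact_mod_cast (le_max_right K _).trans (hRK r hr).le)
    · exact le_trans (by gcongr) (hτ z hz)
  · intro j hj hj0
    rcases Nat.lt_succ_iff_lt_or_eq.1 hj with hj | rfl
    · obtain ⟨x, hx, y, hy, hxK, hyK, hxy⟩ := h.represents j hj hj0
      exact ⟨x, (hagree x hxK).2 hx, y, (hagree y hyK).2 hy, by omega, by omega, hxy⟩
    · exact ⟨d + u, by simp, d, by simp, by omega, by omega, by ring⟩

theorem exists_succ (hω : Tendsto ω atTop atTop) (h : Stage C ω e k P K) :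
    ∃ P' K', Stage C ω e (k + 1) P' K' ∧ K ≤ K' ∧ ∀ x ≤ K, (x ∈ P' ↔ x ∈ P) := by
  by_cases hrep : ∃ x ∈ P, ∃ y ∈ P, x - y = e k
  · obtain ⟨K', hK', hKK'⟩ := h.succ_of_represented fun _ => hrep
    exact ⟨P, K', hK', hKK', fun _ _ => Iff.rfl⟩
  · push Not at hrep
    exact h.succ_of_not_represented hω hrep

theorem exists_seq (hω : Tendsto ω atTop atTop) {P₀ : Set ℤ} {K₀ : ℤ}
    (h₀ : Stage C ω e 0 P₀ K₀) :
    ∃ (P : ℕ → Set ℤ) (K : ℕ → ℤ), ∀ k, Stage C ω e k (P k) (K k) ∧ K k ≤ K (k + 1) ∧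
      ∀ x ≤ K k, (x ∈ P (k + 1) ↔ x ∈ P k) := by
  have step : ∀ k (s : Set ℤ × ℤ), Stage C ω e k s.1 s.2 → ∃ s' : Set ℤ × ℤ,
      Stage C ω e (k + 1) s'.1 s'.2 ∧ s.2 ≤ s'.2 ∧ ∀ x ≤ s.2, (x ∈ s'.1 ↔ x ∈ s.1) :=
    fun k s hs => let ⟨P', K', h'⟩ := hs.exists_succ hω; ⟨(P', K'), h'⟩
  choose! next hnext using step
  let s : ℕ → Set ℤ × ℤ := fun n => Nat.rec (P₀, K₀) next n
  have hs : ∀ k, Stage C ω e k (s k).1 (s k).2 := fun k =>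
    Nat.rec h₀ (fun k ih => (hnext k _ ih).1) k
  exact ⟨fun k => (s k).1, fun k => (s k).2, fun k => ⟨hs k, (hnext k _ (hs k)).2⟩⟩

end Stage

def frozenLimit (P : ℕ → Set ℤ) (K : ℕ → ℤ) : Set ℤ :=
  {a | ∃ k, a ∈ P k ∧ a ≤ K k}

section frozenLimit

variable {P : ℕ → Set ℤ} {K : ℕ → ℤ}

theorem mem_iff_mem_of_le (hK : ∀ k, K k ≤ K (k + 1))
    (hP : ∀ k, ∀ x ≤ K k, (x ∈ P (k + 1) ↔ x ∈ P k)) {k m : ℕ} (hkm : k ≤ m) {x : ℤ}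
    (hx : x ≤ K k) : x ∈ P m ↔ x ∈ P k := by
  induction m, hkm using Nat.le_induction with
  | base => rfl
  | succ m hkm ih => exact (hP m x (hx.trans (monotone_nat_of_le_succ hK hkm))).trans ih

theorem mem_frozenLimit_iff (hK : ∀ k, K k ≤ K (k + 1))
    (hP : ∀ k, ∀ x ≤ K k, (x ∈ P (k + 1) ↔ x ∈ P k)) {k : ℕ} {x : ℤ} (hx : x ≤ K k) :
    x ∈ frozenLimit P K ↔ x ∈ P k := by
  refine ⟨fun ⟨m, hm, hxm⟩ => ?_, fun h => ⟨k, h, hx⟩⟩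
  exact (mem_iff_mem_of_le hK hP (le_max_right m k) hx).1
    ((mem_iff_mem_of_le hK hP (le_max_left m k) hxm).2 hm)

theorem isSidonSet_frozenLimit (hK : ∀ k, K k ≤ K (k + 1))
    (hP : ∀ k, ∀ x ≤ K k, (x ∈ P (k + 1) ↔ x ∈ P k)) (hS : ∀ k, IsSidonSet (P k))
    (hKtop : ∀ x, ∃ k, x ≤ K k) : IsSidonSet (frozenLimit P K) := by
  simp only [isSidonSet_iff_add] at hS ⊢
  intro a ha b hb c hc d hd hsum
  obtain ⟨k, hk⟩ := hKtop (max (max a b) (max c d))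
  have mem : ∀ x ∈ frozenLimit P K, x ≤ max (max a b) (max c d) → x ∈ P k := fun x hx hxm =>
    (mem_frozenLimit_iff hK hP (hxm.trans hk)).1 hx
  exact hS k a (mem a ha (by simp)) b (mem b hb (by simp)) c (mem c hc (by simp))
    d (mem d hd (by simp)) hsum

end frozenLimit

theorem finite_setOf_le_of_pos {A : Set ℤ} (hA : ∀ a ∈ A, 0 < a) (x : ℝ) :
    {a ∈ A | (a : ℝ) ≤ x}.Finite :=
  (Set.finite_Icc 1 ⌊x⌋).subset fun a ⟨ha, hax⟩ => ⟨hA a ha, Int.le_floor.2 hax⟩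

theorem exists_isPerfectDifferenceSet_of_three_dvd {C : Set ℤ} (hCpos : ∀ c ∈ C, 0 < c)
    (hC : IsSidonSet C) (hC3 : ∀ c ∈ C, 3 ∣ c) {ω : ℝ → ℝ} (hω : Tendsto ω atTop atTop) :
    ∃ A : Set ℤ, (∀ a ∈ A, 0 < a) ∧ IsPerfectDifferenceSet A ∧
      ∀ᶠ x in atTop, (({c ∈ C | (c : ℝ) ≤ x}).ncard : ℝ) - ω x ≤
        (({a ∈ A | (a : ℝ) ≤ x}).ncard : ℝ) := by
  obtain ⟨e, he⟩ := exists_surjective_nat ℤ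
  have h₀ : Stage C ω e 0 C 0 :=
    ⟨hC, hCpos, Set.finite_empty.subset fun p hp => hp.2 (hC3 p hp.1),
      fun p hp h3 => (h3 (hC3 p hp)).elim, by simp, by simp [CountBoundedBy], by simp, le_rfl⟩
  obtain ⟨P, K, hPK⟩ := Stage.exists_seq hω h₀
  have hK k := (hPK k).2.1
  have hP k := (hPK k).2.2
  have hKtop (x : ℤ) : ∃ k, x ≤ K k :=
    ⟨x.toNat, by have := (hPK x.toNat).1.le_bound; omega⟩
  set A := frozenLimit P K
  have hApos : ∀ a ∈ A, 0 < a := fun a ⟨k, ha, _⟩ => (hPK k).1.pos a ha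
  have hA : IsSidonSet A := isSidonSet_frozenLimit hK hP (fun k => (hPK k).1.isSidonSet) hKtop
  refine ⟨A, hApos, hA.isPerfectDifferenceSet fun u hu => ?_, ?_⟩
  · obtain ⟨j, rfl⟩ := he u
    obtain ⟨x, hx, y, hy, hxK, hyK, hxy⟩ := (hPK (j + 1)).1.represents j j.lt_succ_self hu
    exact ⟨x, (mem_frozenLimit_iff hK hP hxK).2 hx, y, (mem_frozenLimit_iff hK hP hyK).2 hy,
      hxy⟩
  filter_upwards [tendsto_atTop.1 hω 0] with x hx
  obtain ⟨k, hk⟩ := hKtop ⌈x⌉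
  have hsub : {c ∈ C | (c : ℝ) ≤ x} ⊆
      {a ∈ A | (a : ℝ) ≤ x} ∪ {w ∈ C \ P k | (w : ℝ) ≤ x} := by
    rintro c ⟨hc, hcx⟩
    have hcK : c ≤ K k := (Int.cast_le.1 (hcx.trans (Int.le_ceil x))).trans hk
    by_cases hcP : c ∈ P k
    exacts [Or.inl ⟨(mem_frozenLimit_iff hK hP hcK).2 hcP, hcx⟩, Or.inr ⟨⟨hc, hcP⟩, hcx⟩]
  have hcard : ({c ∈ C | (c : ℝ) ≤ x}.ncard : ℝ) ≤
      {a ∈ A | (a : ℝ) ≤ x}.ncard + {w ∈ C \ P k | (w : ℝ) ≤ x}.ncard := by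
    exact_mod_cast (Set.ncard_le_ncard hsub ((finite_setOf_le_of_pos hApos x).union
      ((hPK k).1.finite_removed.sep _))).trans (Set.ncard_union_le _ _)
  linarith [(hPK k).1.countBoundedBy_removed.ncard_le hx]

theorem stmt_11 (B : Set ℤ) (hBpos : ∀ b ∈ B, 0 < b) (hB : IsSidonSet B)
    (ω : ℝ → ℝ) (hω : Tendsto ω atTop atTop) :
    ∃ A : Set ℤ, (∀ a ∈ A, 0 < a) ∧ IsPerfectDifferenceSet A ∧
      ∀ᶠ x in atTop,
        (({b ∈ B | (b : ℝ) ≤ x / 3}).ncard : ℝ) - ω x ≤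
          (({a ∈ A | (a : ℝ) ≤ x}).ncard : ℝ) := by
  obtain ⟨A, hApos, hA, hcount⟩ := exists_isPerfectDifferenceSet_of_three_dvd
    (C := (fun b : ℤ => 3 * b) '' B)
    (by rintro _ ⟨b, hb, rfl⟩; exact mul_pos three_pos (hBpos b hb))
    (hB.image_mul_left 3) (by rintro _ ⟨b, -, rfl⟩; exact dvd_mul_right 3 b) hω
  refine ⟨A, hApos, hA, hcount.mono fun x hx => ?_⟩
  have himage : {c ∈ (fun b : ℤ => 3 * b) '' B | (c : ℝ) ≤ x} =
      (fun b : ℤ => 3 * b) '' {b ∈ B | (b : ℝ) ≤ x / 3} := by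
    ext c
    constructor
    · rintro ⟨⟨b, hb, rfl⟩, hbx⟩
      exact ⟨b, ⟨hb, by push_cast at hbx; linarith⟩, rfl⟩
    · rintro ⟨b, ⟨hb, hbx⟩, rfl⟩
      exact ⟨⟨b, hb, rfl⟩, by push_cast; linarith⟩
  rwa [himage, Set.ncard_image_of_injective _ (mul_right_injective₀ three_ne_zero)] at hx
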